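/- Let n ≥ 1 be an integer, k an integer with 0 ≤ k < n, and S > 0 a real. Let p₀, p₁, …, p_n be reals in (0, 1/2] satisfying p_i ≥ p_{i−1}·Q(√(nS/(2·p_{i−1}))) for every 1 ≤ i ≤ n. Then 2·p_n/(n·S) ≥ 1/g_{n−k}(max{n·S/(2·p_k), 9}). In particular, taking k = 0 and p₀ = 1/2, p_n ≥ (nS/2)/g_n(max{nS, 9}). -/

import Mathlib

/-- The standard Gaussian tail function `Q(x) = (1/√(2π)) ∫_x^∞ exp(−z²/2) dz`. -/
noncomputable def gaussQ (x : ℝ) : ℝ :=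
  (Real.sqrt (2 * Real.pi))⁻¹ * ∫ z in Set.Ioi x, Real.exp (-z ^ 2 / 2)

/-- The `i`-fold iterated exponential: `g 0 x = x` and `g (i+1) x = exp (g i x)`. -/
noncomputable def iterExp : ℕ → ℝ → ℝ
  | 0, x => x
  | (i + 1), x => Real.exp (iterExp i x)

/-!
Writing `a_i = nS/(2 p_i)`, the recursion gives
`p_{i+1} ≥ p_i a_i e^{-max(a_i, 9)} = (nS/2) e^{-max(a_i, 9)}`, i.e. `a_{i+1} ≤ exp (max a_i 9)`,
which unrolls to `a_n ≤ g_{n-k}(max(a_k, 9))` because every iterate of `max(a_k, 9)` is again at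
least `9`. The estimate `x e^{-max(x, 9)} ≤ Q(√x)` comes from the Mills-ratio bound
`Q(t) ≥ φ(t)(1/t - 1/t³)`, obtained by integrating `(-φ(z)(1/z - 1/z³))' = φ(z)(1 - 3/z⁴)`,
together with `e^x ≥ 8x³` for `x ≥ 9`; for `x ≤ 9` it reduces to `x = 9` since `Q` is antitone.
-/

open Real Set MeasureTheory Filter

lemma integrableOn_exp_neg_sq_div_two (t : ℝ) :
    IntegrableOn (fun z : ℝ => exp (-z ^ 2 / 2)) (Ioi t) := by
  refine (integrable_exp_neg_mul_sq (b := 1 / 2) (by norm_num)).integrableOn.congr_fun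
    (fun z _ => ?_) measurableSet_Ioi
  ring_nf

lemma gaussQ_antitone : Antitone gaussQ := fun a b hab =>
  mul_le_mul_of_nonneg_left
    (setIntegral_mono_set (integrableOn_exp_neg_sq_div_two a)
      (.of_forall fun _ => (exp_pos _).le) (.of_forall fun _ hz => hab.trans_lt hz))
    (by positivity)

lemma hasDerivAt_exp_neg_sq_div_two_mul {z : ℝ} (hz : z ≠ 0) :
    HasDerivAt (fun z => exp (-z ^ 2 / 2) * (1 / z ^ 3 - 1 / z))
      (exp (-z ^ 2 / 2) * (1 - 3 / z ^ 4)) z := by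
  have h : HasDerivAt (fun z => exp (-z ^ 2 / 2) * ((z ^ 3)⁻¹ - z⁻¹)) _ z :=
    ((hasDerivAt_pow 2 z).neg.div_const 2).exp.mul
      (((hasDerivAt_pow 3 z).inv (pow_ne_zero 3 hz)).sub (hasDerivAt_inv hz))
  convert h using 1
  · simp only [one_div]
  · simp only [Pi.neg_apply]
    field_simp
    ring

lemma tendsto_exp_neg_sq_div_two_mul :
    Tendsto (fun z : ℝ => exp (-z ^ 2 / 2) * (1 / z ^ 3 - 1 / z)) atTop (nhds 0) := by
  have hexp : Tendsto (fun z : ℝ => exp (-z ^ 2 / 2)) atTop (nhds 0) := by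
    refine tendsto_exp_atBot.comp <| (tendsto_neg_atTop_atBot.comp <|
      (tendsto_pow_atTop two_ne_zero).atTop_div_const two_pos).congr fun z => ?_
    simp [neg_div]
  have hpoly : Tendsto (fun z : ℝ => 1 / z ^ 3 - 1 / z) atTop (nhds 0) := by
    have := (tendsto_inv_atTop_zero.comp (tendsto_pow_atTop three_ne_zero)).sub
      (tendsto_inv_atTop_zero (𝕜 := ℝ))
    simpa [one_div] using this
  simpa using hexp.mul hpoly

lemma integrableOn_exp_neg_sq_div_two_mul {t : ℝ} (ht : 0 < t) :
    IntegrableOn (fun z => exp (-z ^ 2 / 2) * (1 - 3 / z ^ 4)) (Ioi t) := by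
  refine (integrableOn_exp_neg_sq_div_two t).mul_bdd (c := 1 + 3 / t ^ 4)
    (by fun_prop : Measurable fun z : ℝ => 1 - 3 / z ^ 4).aestronglyMeasurable ?_
  filter_upwards [ae_restrict_mem measurableSet_Ioi] with z hz
  have hzt : 3 / z ^ 4 ≤ 3 / t ^ 4 := by gcongr; exact (mem_Ioi.1 hz).le
  have hz0 : 0 ≤ 3 / z ^ 4 := by positivity
  rw [Real.norm_eq_abs, abs_le]
  constructor <;> linarith

lemma integral_Ioi_exp_neg_sq_div_two_mul {t : ℝ} (ht : 0 < t) :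
    ∫ z in Ioi t, exp (-z ^ 2 / 2) * (1 - 3 / z ^ 4)
      = exp (-t ^ 2 / 2) * (1 / t - 1 / t ^ 3) := by
  rw [integral_Ioi_of_hasDerivAt_of_tendsto'
    (fun z hz => hasDerivAt_exp_neg_sq_div_two_mul (ht.trans_le hz).ne')
    (integrableOn_exp_neg_sq_div_two_mul ht) tendsto_exp_neg_sq_div_two_mul]
  ring

lemma le_gaussQ {t : ℝ} (ht : 0 < t) :
    (√(2 * π))⁻¹ * (exp (-t ^ 2 / 2) * (1 / t - 1 / t ^ 3)) ≤ gaussQ t := by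
  refine mul_le_mul_of_nonneg_left ?_ (by positivity)
  rw [← integral_Ioi_exp_neg_sq_div_two_mul ht]
  refine setIntegral_mono_on (integrableOn_exp_neg_sq_div_two_mul ht)
    (integrableOn_exp_neg_sq_div_two t) measurableSet_Ioi fun z _ => ?_
  have : 0 ≤ 3 / z ^ 4 := by positivity
  nlinarith [exp_pos (-z ^ 2 / 2)]

lemma eight_mul_pow_three_le_exp {x : ℝ} (hx : 9 ≤ x) : 8 * x ^ 3 ≤ exp x := by
  have he3 : 18 ≤ exp 3 := calc
    (18 : ℝ) ≤ 2.7182818283 ^ 3 := by norm_num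
    _ ≤ exp 1 ^ 3 := by gcongr; exact exp_one_gt_d9.le
    _ = exp 3 := by rw [← exp_nat_mul]; norm_num
  have h2x : 2 * x ≤ exp (x / 3) := calc
    2 * x ≤ 18 * (x / 3 - 3 + 1) := by linarith
    _ ≤ exp 3 * exp (x / 3 - 3) := by gcongr; linarith; exact add_one_le_exp _
    _ = exp (x / 3) := by rw [← exp_add]; ring_nf
  calc 8 * x ^ 3 = (2 * x) ^ 3 := by ring
    _ ≤ exp (x / 3) ^ 3 := by gcongr
    _ = exp x := by rw [← exp_nat_mul]; ring_nf

lemma mul_exp_neg_le_gaussQ_sqrt {x : ℝ} (hx : 9 ≤ x) : x * exp (-x) ≤ gaussQ √x := by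
  have hx0 : 0 < x := by linarith
  set t := √x
  have ht : 0 < t := sqrt_pos.2 hx0
  have ht2 : t ^ 2 = x := sq_sqrt hx0.le
  have hkey : √(2 * π) * (x ^ 2 * t) ≤ exp (x / 2) * (x - 1) := by
    refine (pow_le_pow_iff_left₀ (by positivity) (by nlinarith [exp_pos (x / 2)])
      two_ne_zero).1 ?_
    calc (√(2 * π) * (x ^ 2 * t)) ^ 2 = 2 * π * x ^ 5 := by
          rw [mul_pow, sq_sqrt (by positivity), mul_pow, ht2]; ring
      _ ≤ 8 * x ^ 3 * (8 / 9 * x) ^ 2 := by nlinarith [pi_lt_d2, pow_pos hx0 5]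
      _ ≤ exp x * (x - 1) ^ 2 := by gcongr; exact eight_mul_pow_three_le_exp hx; linarith
      _ = (exp (x / 2) * (x - 1)) ^ 2 := by rw [mul_pow, ← exp_nat_mul]; ring_nf
  refine le_trans ?_ (le_gaussQ ht)
  have hexp : exp (-x) = exp (-t ^ 2 / 2) / exp (x / 2) := by rw [← exp_sub, ht2]; ring_nf
  have hfrac : 1 / t - 1 / t ^ 3 = (x - 1) / (x * t) := by rw [← ht2]; field_simp
  rw [hexp, hfrac]
  field_simp
  linarith

lemma mul_exp_neg_max_le_gaussQ_sqrt (x : ℝ) : x * exp (-max x 9) ≤ gaussQ √x := by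
  rcases le_total x 9 with hx | hx
  · rw [max_eq_right hx]
    calc x * exp (-9) ≤ 9 * exp (-9) := by gcongr
      _ ≤ gaussQ √9 := mul_exp_neg_le_gaussQ_sqrt le_rfl
      _ ≤ gaussQ √x := gaussQ_antitone (sqrt_le_sqrt hx)
  · rw [max_eq_left hx]
    exact mul_exp_neg_le_gaussQ_sqrt hx

lemma div_le_exp_max_of_mul_gaussQ_le {N p q : ℝ} (hN : 0 < N) (hp : 0 < p)
    (hq : p * gaussQ √(N / (2 * p)) ≤ q) : N / (2 * q) ≤ exp (max (N / (2 * p)) 9) := by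
  set M := max (N / (2 * p)) 9
  have hlow : N / 2 * exp (-M) ≤ q := calc
    N / 2 * exp (-M) = p * (N / (2 * p) * exp (-M)) := by field_simp
    _ ≤ p * gaussQ √(N / (2 * p)) := by gcongr; exact mul_exp_neg_max_le_gaussQ_sqrt _
    _ ≤ q := hq
  have hq0 : 0 < q := lt_of_lt_of_le (by positivity) hlow
  rw [div_le_iff₀ (by positivity)]
  calc N = exp M * (2 * (N / 2 * exp (-M))) := by rw [exp_neg]; field_simp
    _ ≤ exp M * (2 * q) := by gcongr

lemma le_iterExp {c M : ℝ} (h : c ≤ M) : ∀ j, c ≤ iterExp j M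
  | 0 => h
  | j + 1 => (le_iterExp h j).trans <| (le_add_of_nonneg_right zero_le_one).trans (add_one_le_exp _)

lemma le_iterExp_of_le_exp_max {a : ℕ → ℝ} {c : ℝ} {m : ℕ}
    (h : ∀ i < m, a (i + 1) ≤ exp (max (a i) c)) : ∀ j ≤ m, a j ≤ iterExp j (max (a 0) c)
  | 0, _ => le_max_left _ _
  | j + 1, hj => (h j hj).trans <| exp_le_exp.2 <|
      max_le (le_iterExp_of_le_exp_max h j (by omega)) (le_iterExp (le_max_right _ _) j)

theorem iterated_lower_bound_general
    (n : ℕ) (k : ℕ) (hk : k < n) (S : ℝ) (hS : 0 < S)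
    (p : ℕ → ℝ) (hp : ∀ i : ℕ, i ≤ n → p i ∈ Set.Ioc (0 : ℝ) (1 / 2))
    (hrec : ∀ i : ℕ, i < n →
      p (i + 1) ≥ p i * gaussQ (Real.sqrt ((n : ℝ) * S / (2 * p i)))) :
    2 * p n / ((n : ℝ) * S) ≥ 1 / iterExp (n - k) (max ((n : ℝ) * S / (2 * p k)) 9) ∧
    (p 0 = 1 / 2 → p n ≥ ((n : ℝ) * S / 2) / iterExp n (max ((n : ℝ) * S) 9)) := by
  have hn : (0 : ℝ) < n := Nat.cast_pos.2 (Nat.zero_lt_of_lt hk)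
  have hN : 0 < (n : ℝ) * S := mul_pos hn hS
  have hstep : ∀ i < n, n * S / (2 * p (i + 1)) ≤ exp (max (n * S / (2 * p i)) 9) :=
    fun i hi => div_le_exp_max_of_mul_gaussQ_le hN (hp i hi.le).1 (hrec i hi)
  have hchain : ∀ j ≤ n, n * S / (2 * p n) ≤ iterExp (n - j) (max (n * S / (2 * p j)) 9) := by
    intro j hj
    have := le_iterExp_of_le_exp_max (a := fun i => n * S / (2 * p (j + i))) (m := n - j)
      (fun i hi => hstep (j + i) (by omega)) (n - j) le_rfl
    rwa [Nat.add_sub_cancel' hj, add_zero] at this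
  have hpn : 0 < n * S / (2 * p n) := by have := (hp n le_rfl).1; positivity
  refine ⟨?_, fun hp0 => ?_⟩
  · rw [ge_iff_le, ← one_div_div ((n : ℝ) * S)]
    exact one_div_le_one_div_of_le hpn (hchain k hk.le)
  · have h0 := hchain 0 (Nat.zero_le n)
    rw [hp0, Nat.sub_zero, show (2 : ℝ) * (1 / 2) = 1 by norm_num, div_one] at h0
    calc (n : ℝ) * S / 2 / iterExp n (max (n * S) 9) ≤ n * S / 2 / (n * S / (2 * p n)) :=
          div_le_div_of_nonneg_left (by positivity) hpn h0
      _ = p n := by field_simp [hn.ne']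

/-- **Unrolled iterated-exponential lower bound (eq. (26)).**
If `p₀, …, p_n ∈ (0, 1/2]` satisfy the recursion `p_i ≥ p_{i−1}·Q(√(nS/(2p_{i−1})))`,
then for `0 ≤ k < n`, `2p_n/(nS) ≥ 1/g_{n−k}(max{nS/(2p_k), 9})`; in particular, if
`p₀ = 1/2` then `p_n ≥ (nS/2)/g_n(max{nS, 9})`. -/
theorem iterated_lower_bound
    (n : ℕ) (hn : 1 ≤ n) (k : ℕ) (hk : k < n) (S : ℝ) (hS : 0 < S)
    (p : ℕ → ℝ) (hp : ∀ i : ℕ, i ≤ n → p i ∈ Set.Ioc (0 : ℝ) (1 / 2))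
    (hrec : ∀ i : ℕ, i < n →
      p (i + 1) ≥ p i * gaussQ (Real.sqrt ((n : ℝ) * S / (2 * p i)))) :
    2 * p n / ((n : ℝ) * S) ≥ 1 / iterExp (n - k) (max ((n : ℝ) * S / (2 * p k)) 9) ∧
    (p 0 = 1 / 2 → p n ≥ ((n : ℝ) * S / 2) / iterExp n (max ((n : ℝ) * S) 9)) :=
  iterated_lower_bound_general n k hk S hS p hp hrec
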